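/- Let C be a k-coalgebra, X a finite-dimensional right C-comodule with coaction ρ, and c = β(x_(0)) x_(1) ∈ C for some β ∈ X*, x ∈ X. Let C₁ ⊆ C be a finite-dimensional subcoalgebra with ρ(X) ⊆ X ⊗ C₁. Then for any vector space U with a family of linear maps i_Y^U : Hom_k(Y,Y) → U (Y ranging over finite-dimensional right C-comodules) satisfying the dinaturality condition i_Y^U(T(f) ∘ S) = i_Z^U(S ∘ T(f)), one has i_X^U(β ⊗ x) = i_{C₁}^U(ε ⊗ c), where C₁ is regarded as a right C-comodule via Δ and (ε ⊗ c)(d) := ε(d)c. -/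
import Mathlib


/- STATEMENT 4: let X be a finite-dimensional right C-comodule, β ∈ X*, x ∈ X,
and c = β(x₍₀₎)x₍₁₎.  Let C₁ ⊆ C be a finite-dimensional subcoalgebra
(regarded as a right C-comodule via Δ, embedded by ι) with ρ(X) ⊆ X ⊗ C₁.
Then for every dinatural family i^U over finite-dimensional right C-comodules,
i_X^U(β ⊗ x) = i_{C₁}^U(ε ⊗ c). -/

open TensorProduct

noncomputable section
variable (k : Type) [Field k]
variable (C : Type) [AddCommGroup C] [Module k C] [Coalgebra k C]

/-- A finite-dimensional right `C`-comodule. -/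
structure FdComod where
  carrier : Type
  [ab : AddCommGroup carrier]
  [mod : Module k carrier]
  [fin : FiniteDimensional k carrier]
  ρ : carrier →ₗ[k] carrier ⊗[k] C
  coassoc : (TensorProduct.assoc k carrier C C).toLinearMap ∘ₗ
      (TensorProduct.map ρ LinearMap.id) ∘ₗ ρ
      = (TensorProduct.map LinearMap.id Coalgebra.comul) ∘ₗ ρ
  counit : (TensorProduct.map LinearMap.id Coalgebra.counit) ∘ₗ ρ
      = (TensorProduct.rid k carrier).symm.toLinearMap

attribute [instance] FdComod.ab FdComod.mod FdComod.fin

/-- A morphism of right `C`-comodules. -/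
def IsComodHom (X Y : FdComod k C) (f : X.carrier →ₗ[k] Y.carrier) : Prop :=
  Y.ρ ∘ₗ f = (TensorProduct.map f LinearMap.id) ∘ₗ X.ρ

/-- Dinaturality of a family of maps `Hom_k(X,X) → U` indexed by
finite-dimensional right `C`-comodules: `i_X(f ∘ S) = i_Y(S ∘ f)` for any
comodule morphism `f : Y → X` and linear map `S : X → Y`. -/
def DinatComod (U : Type) [AddCommGroup U] [Module k U]
    (i : ∀ X : FdComod k C, (X.carrier →ₗ[k] X.carrier) →ₗ[k] U) : Prop :=
  ∀ (X Y : FdComod k C) (f : Y.carrier →ₗ[k] X.carrier), IsComodHom k C Y X f →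
    ∀ S : X.carrier →ₗ[k] Y.carrier, i X (f ∘ₗ S) = i Y (S ∘ₗ f)

/-- The canonical maps `i_X : Hom_k(X,X) → C`; on a rank-one map `β ⊗ x`
(i.e. `y ↦ β(y)x`) it is given by `β(x₍₀₎) x₍₁₎`. -/
def canI (X : FdComod k C) : (X.carrier →ₗ[k] X.carrier) →ₗ[k] C :=
  let b := Module.Free.chooseBasis k X.carrier
  ∑ j, ((TensorProduct.lid k C).toLinearMap ∘ₗ
          TensorProduct.map (b.coord j) LinearMap.id ∘ₗ X.ρ) ∘ₗ
        (LinearMap.applyₗ (b j) : (X.carrier →ₗ[k] X.carrier) →ₗ[k] X.carrier)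

theorem dinat_eval_eq_on_subcoalgebra
    (X : FdComod k C) (β : X.carrier →ₗ[k] k) (x : X.carrier)
    -- C₁, a finite-dimensional right C-comodule embedded in C via ι,
    -- whose coaction corresponds to Δ (i.e. C₁ is a subcoalgebra viewed as a
    -- comodule via Δ):
    (C₁ : FdComod k C) (ι : C₁.carrier →ₗ[k] C) (hinj : Function.Injective ι)
    (hι : (TensorProduct.map ι LinearMap.id) ∘ₗ C₁.ρ = Coalgebra.comul ∘ₗ ι)
    -- ρ(X) ⊆ X ⊗ C₁ : the coaction of X factors through X ⊗ C₁
    (ρ' : X.carrier →ₗ[k] X.carrier ⊗[k] C₁.carrier)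
    (hρ' : (TensorProduct.map LinearMap.id ι) ∘ₗ ρ' = X.ρ)
    -- c = β(x₍₀₎)x₍₁₎, as an element c' of C₁:
    (c' : C₁.carrier)
    (hc' : ι c' = (TensorProduct.lid k C) ((TensorProduct.map β LinearMap.id) (X.ρ x))) :
    ∀ (U : Type) [AddCommGroup U] [Module k U]
      (iU : ∀ Y : FdComod k C, (Y.carrier →ₗ[k] Y.carrier) →ₗ[k] U),
      DinatComod k C U iU →
      iU X (β.smulRight x) = iU C₁ ((Coalgebra.counit ∘ₗ ι).smulRight c') := by

  intro U _ _ iU hdin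
  set g : X.carrier →ₗ[k] C₁.carrier :=
    (TensorProduct.lid k C₁.carrier).toLinearMap ∘ₗ
      (TensorProduct.map β LinearMap.id) ∘ₗ ρ' with hg
  -- ι ∘ g = lid ∘ (map β id) ∘ X.ρ
  have hig : ι ∘ₗ g = (TensorProduct.lid k C).toLinearMap ∘ₗ
      (TensorProduct.map β LinearMap.id) ∘ₗ X.ρ := by
    rw [← hρ']
    have key : ι ∘ₗ (TensorProduct.lid k C₁.carrier).toLinearMap ∘ₗ
        (TensorProduct.map β LinearMap.id) =
        (TensorProduct.lid k C).toLinearMap ∘ₗ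
          (TensorProduct.map β LinearMap.id) ∘ₗ
          (TensorProduct.map LinearMap.id ι) := by
      apply TensorProduct.ext'
      intro y d
      simp
    calc ι ∘ₗ g = (ι ∘ₗ (TensorProduct.lid k C₁.carrier).toLinearMap ∘ₗ
        (TensorProduct.map β LinearMap.id)) ∘ₗ ρ' := by
          rw [hg]; ext y; simp
    _ = _ := by rw [key]; ext y; simp
  have hflat : Function.Injective (TensorProduct.map ι (LinearMap.id : C →ₗ[k] C)) := by
    have := Module.Flat.rTensor_preserves_injective_linearMap (M := C) ι hinj
    simpa [LinearMap.rTensor] using this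
  have hcomod : IsComodHom k C X C₁ g := by
    unfold IsComodHom
    have hmain : (TensorProduct.map ι (LinearMap.id : C →ₗ[k] C)) ∘ₗ (C₁.ρ ∘ₗ g) =
        (TensorProduct.map ι (LinearMap.id : C →ₗ[k] C)) ∘ₗ
          ((TensorProduct.map g LinearMap.id) ∘ₗ X.ρ) := by
      have l1 : (TensorProduct.map ι (LinearMap.id : C →ₗ[k] C)) ∘ₗ (C₁.ρ ∘ₗ g) =
          Coalgebra.comul ∘ₗ (ι ∘ₗ g) := by
        rw [← LinearMap.comp_assoc, hι, LinearMap.comp_assoc]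
      have l2 : (TensorProduct.map ι (LinearMap.id : C →ₗ[k] C)) ∘ₗ
          ((TensorProduct.map g LinearMap.id) ∘ₗ X.ρ) =
          (TensorProduct.map (ι ∘ₗ g) (LinearMap.id : C →ₗ[k] C)) ∘ₗ X.ρ := by
        rw [← LinearMap.comp_assoc, ← TensorProduct.map_comp, LinearMap.comp_id]
      rw [l1, l2, hig]
      -- Now: comul ∘ (lid ∘ mapβ ∘ ρ) = map (lid ∘ mapβ ∘ ρ) id ∘ ρ
      apply LinearMap.ext
      intro y
      have coas := LinearMap.congr_fun X.coassoc y
      -- LHS = lid (map β id ((map id comul) (ρ y)))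
      have lhs : (Coalgebra.comul ∘ₗ (TensorProduct.lid k C).toLinearMap ∘ₗ
          (TensorProduct.map β LinearMap.id) ∘ₗ X.ρ) y =
          (TensorProduct.lid k (C ⊗[k] C))
            ((TensorProduct.map β LinearMap.id)
              ((TensorProduct.map LinearMap.id Coalgebra.comul) (X.ρ y))) := by
        simp only [LinearMap.comp_apply]
        induction X.ρ y using TensorProduct.induction_on with
        | zero => simp
        | tmul a b => simp
        | add u v hu hv => simp_all
      rw [lhs, ← LinearMap.comp_apply (TensorProduct.map LinearMap.id Coalgebra.comul),
        ← X.coassoc]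
      simp only [LinearMap.comp_apply, LinearEquiv.coe_coe]
      have aux : ∀ (z : X.carrier ⊗[k] C) (b : C),
          (TensorProduct.lid k (C ⊗[k] C))
            ((TensorProduct.map β LinearMap.id)
              ((TensorProduct.assoc k X.carrier C C) (z ⊗ₜ[k] b))) =
          ((TensorProduct.lid k C) ((TensorProduct.map β LinearMap.id) z)) ⊗ₜ[k] b := by
        intro z b
        induction z using TensorProduct.induction_on with
        | zero => simp
        | tmul p q => simp [TensorProduct.smul_tmul']
        | add u v hu hv =>
          simp only [TensorProduct.add_tmul, map_add, hu, hv]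
      induction X.ρ y using TensorProduct.induction_on with
      | zero => simp
      | tmul a b =>
        simp only [TensorProduct.map_tmul, LinearMap.id_coe, id_eq, aux,
          LinearMap.comp_apply, LinearEquiv.coe_coe]
      | add u v hu hv => simp_all
    apply LinearMap.ext
    intro y
    exact hflat (LinearMap.congr_fun hmain y)
  set S : C₁.carrier →ₗ[k] X.carrier := (Coalgebra.counit ∘ₗ ι).smulRight x with hS
  have hgx : g x = c' := by
    apply hinj
    have := LinearMap.congr_fun hig x
    simp only [LinearMap.comp_apply, LinearEquiv.coe_coe] at this
    rw [this, hc']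
  have hSg : S ∘ₗ g = β.smulRight x := by
    apply LinearMap.ext
    intro y
    have hco := LinearMap.congr_fun X.counit y
    simp only [LinearMap.comp_apply, LinearEquiv.coe_coe] at hco
    have higy := LinearMap.congr_fun hig y
    simp only [LinearMap.comp_apply, LinearEquiv.coe_coe] at higy
    simp only [hS, LinearMap.comp_apply, LinearMap.smulRight_apply, higy]
    congr 1
    -- ε (lid (map β id (ρ y))) = β y
    have : Coalgebra.counit ((TensorProduct.lid k C) ((TensorProduct.map β LinearMap.id) (X.ρ y)))
        = (TensorProduct.lid k k) ((TensorProduct.map β LinearMap.id)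
            ((TensorProduct.map LinearMap.id Coalgebra.counit) (X.ρ y))) := by
      induction X.ρ y using TensorProduct.induction_on with
      | zero => simp
      | tmul a b => simp [mul_comm]
      | add u v hu hv => simp_all
    rw [this, hco]
    simp
  have hgS : g ∘ₗ S = (Coalgebra.counit ∘ₗ ι).smulRight c' := by
    apply LinearMap.ext
    intro d
    simp [hS, hgx]
  rw [← hSg, ← hgS]
  exact (hdin C₁ X g hcomod S).symm
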